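/- Let X be a real separable reflexive Banach space with sequences (e_l) ⊂ X and (e_l*) ⊂ X* such that X is the closed linear span of {e_l : l ∈ ℕ}, the weak-star closed linear span of {e_l* : l ∈ ℕ} is X*, and ⟨e_i*, e_l⟩ equals 1 if i = l and 0 otherwise. For j ∈ ℕ set Z_j := the closed linear span of {e_j, e_{j+1}, …}. Let Ξ : X → ℝ be weakly-strongly continuous (i.e. if u_k converges weakly to u in X then Ξ(u_k) → Ξ(u)) with Ξ(0) = 0, and let τ > 0. Then for each j ∈ ℕ the quantity α_j := sup{ |Ξ(u)| : u ∈ Z_j, ‖u‖_X ≤ τ } is finite, and α_j → 0 as j → ∞. -/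

import Mathlib

/-!
By reflexivity, a functional on `X*` that kills the span of the `e_l*` is evaluation at some
`x ∈ X` with `⟨e_l*, x⟩ = 0` for all `l`; weak-star density of that span then forces it to kill
all of `X*`. So the span is norm dense, `X*` is separable, and sequential Banach–Alaoglu in
`X** = X` makes bounded sequences of `X` weakly sequentially precompact. Consequently `Ξ` is
bounded on balls. If `α_j` did not tend to `0`, there would be `u_k ∈ Z_{n_k}`, `n_k → ∞`,
`‖u_k‖ ≤ τ`, `|Ξ u_k| ≥ ε`. Every coordinate `⟨e_i*, u_k⟩` is eventually `0`, so every weak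
cluster point is annihilated by the `e_i*`, hence is `0`; thus `u_k ⇀ 0` and `Ξ u_k → Ξ 0 = 0`.
-/

open Set Filter Topology

lemma StrongDual.apply_eq_zero_of_mem_closure_span {M : Type*} [AddCommGroup M] [Module ℝ M]
    [TopologicalSpace M] {f : StrongDual ℝ M} {s : Set M} (hf : ∀ x ∈ s, f x = 0) {x : M}
    (hx : x ∈ closure (Submodule.span ℝ s : Set M)) : f x = 0 :=
  closure_minimal (Submodule.span_le.2 fun y hy => LinearMap.mem_ker.2 (hf y hy) :
    Submodule.span ℝ s ≤ LinearMap.ker (f : M →ₗ[ℝ] ℝ)) f.isClosed_ker hx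

lemma Submodule.dense_of_forall_dual_eq_zero {E : Type*} [NormedAddCommGroup E] [NormedSpace ℝ E]
    (N : Submodule ℝ E) (h : ∀ Φ : StrongDual ℝ E, (∀ x ∈ N, Φ x = 0) → Φ = 0) :
    Dense (N : Set E) := by
  rw [Submodule.dense_iff_topologicalClosure_eq_top, eq_top_iff']
  intro f
  by_contra hf
  have : IsClosed (N.topologicalClosure : Set E) := N.isClosed_topologicalClosure
  obtain ⟨g, hg⟩ := SeparatingDual.exists_ne_zero (R := ℝ)
    (mt (Submodule.Quotient.mk_eq_zero N.topologicalClosure).1 hf)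
  refine hg (DFunLike.congr_fun (h (g.comp N.topologicalClosure.mkQL) fun x hx => ?_) f)
  simp [(Submodule.Quotient.mk_eq_zero _).2 (N.le_topologicalClosure hx)]

lemma separableSpace_of_dense_span {E : Type*} [AddCommGroup E] [Module ℝ E] [TopologicalSpace E]
    [ContinuousAdd E] [ContinuousSMul ℝ E] {s : Set E} (hs : s.Countable)
    (hdense : Dense (Submodule.span ℝ s : Set E)) : TopologicalSpace.SeparableSpace E := by
  rw [← TopologicalSpace.isSeparable_univ_iff, ← hdense.closure_eq]
  exact hs.isSeparable.span.closure

section WeakConvergence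

variable {X : Type*} [NormedAddCommGroup X] [NormedSpace ℝ X]

lemma WeakDual.apply_eq_zero_of_dense_span {s : Set (WeakDual ℝ X)}
    (hs : Dense (Submodule.span ℝ s : Set (WeakDual ℝ X))) {x : X} (hx : ∀ g ∈ s, g x = 0)
    (g : WeakDual ℝ X) : g x = 0 :=
  StrongDual.apply_eq_zero_of_mem_closure_span (f := WeakBilin.eval (topDualPairing ℝ X) x) hx
    (hs.closure_eq ▸ mem_univ g)

lemma dense_span_toStrongDual_of_surjective {s : Set (WeakDual ℝ X)}
    (hrefl : Function.Surjective (NormedSpace.inclusionInDoubleDual ℝ X))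
    (hs : Dense (Submodule.span ℝ s : Set (WeakDual ℝ X))) :
    Dense (Submodule.span ℝ (WeakDual.toStrongDual '' s) : Set (StrongDual ℝ X)) := by
  refine Submodule.dense_of_forall_dual_eq_zero _ fun Φ hΦ => ?_
  obtain ⟨x, rfl⟩ := hrefl Φ
  ext g
  exact WeakDual.apply_eq_zero_of_dense_span hs
    (fun g hg => hΦ _ (Submodule.subset_span (mem_image_of_mem _ hg))) (StrongDual.toWeakDual g)

def WeakTendsto (U : ℕ → X) (u : X) : Prop :=
  ∀ f : StrongDual ℝ X, Tendsto (fun k => f (U k)) atTop (𝓝 (f u))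

section SeparableDual

variable [TopologicalSpace.SeparableSpace (StrongDual ℝ X)]

lemma exists_weakTendsto_subseq
    (hrefl : Function.Surjective (NormedSpace.inclusionInDoubleDual ℝ X))
    {U : ℕ → X} {C : ℝ} (hU : ∀ k, ‖U k‖ ≤ C) :
    ∃ φ : ℕ → ℕ, StrictMono φ ∧ ∃ v : X, WeakTendsto (U ∘ φ) v := by
  have hball : ∀ k, StrongDual.toWeakDual (NormedSpace.inclusionInDoubleDual ℝ X (U k)) ∈
      WeakDual.toStrongDual ⁻¹' Metric.closedBall 0 C := fun k =>
    (mem_closedBall_zero_iff (E := StrongDual ℝ (StrongDual ℝ X))).2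
      ((NormedSpace.double_dual_bound ℝ X (U k)).trans (hU k))
  obtain ⟨Ψ, -, φ, hφ, hlim⟩ := WeakDual.isSeqCompact_closedBall ℝ _ 0 C hball
  obtain ⟨v, hv⟩ := hrefl (WeakDual.toStrongDual Ψ)
  refine ⟨φ, hφ, v, fun f => ?_⟩
  have hΨ : Ψ f = f v := by rw [← WeakDual.toStrongDual_apply, ← hv]; rfl
  exact hΨ ▸ ((WeakDual.eval_continuous f).tendsto Ψ).comp hlim

lemma weakTendsto_of_bounded_of_tendsto_apply
    (hrefl : Function.Surjective (NormedSpace.inclusionInDoubleDual ℝ X))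
    {s : Set (WeakDual ℝ X)} (hs : Dense (Submodule.span ℝ s : Set (WeakDual ℝ X)))
    {U : ℕ → X} {u : X} {C : ℝ} (hU : ∀ k, ‖U k‖ ≤ C)
    (hUs : ∀ g ∈ s, Tendsto (fun k => g (U k)) atTop (𝓝 (g u))) :
    WeakTendsto U u := by
  intro f
  refine tendsto_of_subseq_tendsto fun ns hns => ?_
  obtain ⟨φ, hφ, v, hv⟩ := exists_weakTendsto_subseq hrefl fun k => hU (ns k)
  have hvu : v = u := by
    refine sub_eq_zero.1 (SeparatingDual.eq_zero_of_forall_dual_eq_zero (R := ℝ) fun f' => ?_)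
    refine WeakDual.apply_eq_zero_of_dense_span hs (fun g hg => ?_) (StrongDual.toWeakDual f')
    rw [map_sub, sub_eq_zero]
    exact tendsto_nhds_unique (hv (WeakDual.toStrongDual g))
      ((hUs g hg).comp (hns.comp hφ.tendsto_atTop))
  exact ⟨φ, hvu ▸ hv f⟩

lemma isBounded_image_closedBall_of_weakTendsto
    (hrefl : Function.Surjective (NormedSpace.inclusionInDoubleDual ℝ X))
    {F : Type*} [SeminormedAddCommGroup F] {Ξ : X → F}
    (hΞ : ∀ U u, WeakTendsto U u → Tendsto (fun k => Ξ (U k)) atTop (𝓝 (Ξ u))) (C : ℝ) :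
    Bornology.IsBounded (Ξ '' Metric.closedBall 0 C) := by
  by_contra hunb
  simp only [isBounded_iff_forall_norm_le, forall_mem_image, not_exists, not_forall,
    not_le, exists_prop] at hunb
  choose U hUC hU using fun n : ℕ => hunb n
  obtain ⟨φ, hφ, v, hv⟩ :=
    exists_weakTendsto_subseq hrefl fun k => mem_closedBall_zero_iff.1 (hUC k)
  refine not_tendsto_atTop_of_tendsto_nhds (hΞ _ v hv).norm ?_
  exact tendsto_atTop_mono (fun k => (Nat.cast_le.2 hφ.le_apply).trans (hU (φ k)).le)
    tendsto_natCast_atTop_atTop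

lemma eventually_forall_dist_lt_of_eventually_apply_eq_zero
    (hrefl : Function.Surjective (NormedSpace.inclusionInDoubleDual ℝ X))
    {s : Set (WeakDual ℝ X)} (hs : Dense (Submodule.span ℝ s : Set (WeakDual ℝ X)))
    {Y : Type*} [PseudoMetricSpace Y] {Ξ : X → Y}
    (hΞ : ∀ U u, WeakTendsto U u → Tendsto (fun k => Ξ (U k)) atTop (𝓝 (Ξ u)))
    {Z : ℕ → Set X} (hZ : ∀ g ∈ s, ∀ᶠ j in atTop, ∀ u ∈ Z j, g u = 0) (C : ℝ) {ε : ℝ}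
    (hε : 0 < ε) : ∀ᶠ j in atTop, ∀ u ∈ Z j, ‖u‖ ≤ C → dist (Ξ u) (Ξ 0) < ε := by
  by_contra h
  obtain ⟨φ, hφ, hfar⟩ := extraction_of_frequently_atTop (not_eventually.1 h)
  simp only [not_forall, not_lt, exists_prop] at hfar
  choose U hUZ hUC hUε using hfar
  have hU0 : WeakTendsto U 0 := by
    refine weakTendsto_of_bounded_of_tendsto_apply hrefl hs hUC fun g hg => ?_
    rw [map_zero]
    refine tendsto_const_nhds.congr' ?_
    filter_upwards [hφ.tendsto_atTop.eventually (hZ g hg)] with k hk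
    exact (hk _ (hUZ k)).symm
  obtain ⟨k, hk⟩ := ((Metric.tendsto_nhds.1 (hΞ U 0 hU0)) ε hε).exists
  exact (hUε k).not_gt hk

end SeparableDual

end WeakConvergence

theorem weak_strong_sup_tendsto_zero_general
    (X : Type*) [NormedAddCommGroup X] [NormedSpace ℝ X]
    (hrefl : Function.Surjective (⇑(NormedSpace.inclusionInDoubleDual ℝ X)))
    (e : ℕ → X) (estar : ℕ → WeakDual ℝ X)
    (hspanX' : Dense ((Submodule.span ℝ (Set.range estar) :
      Submodule ℝ (WeakDual ℝ X)) : Set (WeakDual ℝ X)))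
    (hdual : ∀ i l : ℕ, estar i (e l) = if i = l then (1:ℝ) else 0)
    (Ξ : X → ℝ) (hΞ0 : Ξ 0 = 0)
    (hΞ : ∀ (U : ℕ → X) (u : X),
      (∀ φ : StrongDual ℝ X,
        Filter.Tendsto (fun k => φ (U k)) Filter.atTop (𝓝 (φ u))) →
      Filter.Tendsto (fun k => Ξ (U k)) Filter.atTop (𝓝 (Ξ u)))
    (τ : ℝ) :
    (∀ j : ℕ, BddAbove {rr : ℝ | ∃ u : X,
        u ∈ closure ((Submodule.span ℝ (e '' Set.Ici j) : Submodule ℝ X) : Set X) ∧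
        ‖u‖ ≤ τ ∧ rr = |Ξ u|}) ∧
    Filter.Tendsto (fun j => sSup {rr : ℝ | ∃ u : X,
        u ∈ closure ((Submodule.span ℝ (e '' Set.Ici j) : Submodule ℝ X) : Set X) ∧
        ‖u‖ ≤ τ ∧ rr = |Ξ u|}) Filter.atTop (𝓝 0) := by
  have : TopologicalSpace.SeparableSpace (StrongDual ℝ X) :=
    separableSpace_of_dense_span ((countable_range estar).image _)
      (dense_span_toStrongDual_of_surjective hrefl hspanX')
  have htail : ∀ g ∈ range estar, ∀ᶠ j in atTop, ∀ u ∈ closure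
      ((Submodule.span ℝ (e '' Ici j) : Submodule ℝ X) : Set X), g u = 0 := by
    rintro _ ⟨i, rfl⟩
    filter_upwards [eventually_gt_atTop i] with j hij u hu
    refine StrongDual.apply_eq_zero_of_mem_closure_span
      (f := WeakDual.toStrongDual (estar i)) ?_ hu
    rintro _ ⟨l, hl, rfl⟩
    simpa [(hij.trans_le hl).ne] using hdual i l
  obtain ⟨M, hM⟩ := isBounded_iff_forall_norm_le.1
    (isBounded_image_closedBall_of_weakTendsto hrefl hΞ τ)
  refine ⟨fun j => ⟨M, ?_⟩, Metric.tendsto_nhds.2 fun ε hε => ?_⟩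
  · rintro _ ⟨u, -, hu, rfl⟩
    exact hM _ (mem_image_of_mem _ (mem_closedBall_zero_iff.2 hu))
  filter_upwards [eventually_forall_dist_lt_of_eventually_apply_eq_zero hrefl hspanX' hΞ htail τ
    (half_pos hε)] with j hj
  rw [Real.dist_eq, sub_zero, abs_of_nonneg (Real.sSup_nonneg ?nonneg)]
  · refine (Real.sSup_le ?_ (half_pos hε).le).trans_lt (half_lt_self hε)
    rintro _ ⟨u, hu, huτ, rfl⟩
    simpa [hΞ0] using (hj u hu huτ).le
  · rintro _ ⟨u, -, -, rfl⟩
    exact abs_nonneg _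

theorem weak_strong_sup_tendsto_zero
    (X : Type*) [NormedAddCommGroup X] [NormedSpace ℝ X] [CompleteSpace X]
    [TopologicalSpace.SeparableSpace X]
    (hrefl : Function.Surjective (⇑(NormedSpace.inclusionInDoubleDual ℝ X)))
    (e : ℕ → X) (estar : ℕ → WeakDual ℝ X)
    (hspanX : Dense ((Submodule.span ℝ (Set.range e) : Submodule ℝ X) : Set X))
    (hspanX' : Dense ((Submodule.span ℝ (Set.range estar) :
      Submodule ℝ (WeakDual ℝ X)) : Set (WeakDual ℝ X)))
    (hdual : ∀ i l : ℕ, estar i (e l) = if i = l then (1:ℝ) else 0)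
    (Ξ : X → ℝ) (hΞ0 : Ξ 0 = 0)
    (hΞ : ∀ (U : ℕ → X) (u : X),
      (∀ φ : StrongDual ℝ X,
        Filter.Tendsto (fun k => φ (U k)) Filter.atTop (𝓝 (φ u))) →
      Filter.Tendsto (fun k => Ξ (U k)) Filter.atTop (𝓝 (Ξ u)))
    (τ : ℝ) (hτ : 0 < τ) :
    (∀ j : ℕ, BddAbove {rr : ℝ | ∃ u : X,
        u ∈ closure ((Submodule.span ℝ (e '' Set.Ici j) : Submodule ℝ X) : Set X) ∧
        ‖u‖ ≤ τ ∧ rr = |Ξ u|}) ∧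
    Filter.Tendsto (fun j => sSup {rr : ℝ | ∃ u : X,
        u ∈ closure ((Submodule.span ℝ (e '' Set.Ici j) : Submodule ℝ X) : Set X) ∧
        ‖u‖ ≤ τ ∧ rr = |Ξ u|}) Filter.atTop (𝓝 0) :=
  weak_strong_sup_tendsto_zero_general X hrefl e estar hspanX' hdual Ξ hΞ0 hΞ τ
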